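/- Let p > 3 be a prime and let t, z be p-adic integers. Then Σ_{k=0}^{p−1} ((1+pt)/2)_k (−pt/2)_k / (k!)² · z^k ≡ 1 − (pt/2) Σ_{k=1}^{p−1} (C(2k,k)/k) (z/4)^k (mod p²), a congruence in ℤ_p. -/

import Mathlib

/-!
Put `w = pt/2`. Since `(-w)_k = -w (1-w)_{k-1}` and `C(2k,k)/(k 4^k) = (1/2)_k (k-1)! / k!²`,
the `k`-th summand on the left plus the `k`-th summand of `(pt/2) Σ …` equals
`-w z^k / k!² · ((1/2 + w)_k (1-w)_{k-1} - (1/2)_k (1)_{k-1})`.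
For `k < p` the factorial is a unit, and the bracket, a difference of products of `p`-adic
integers whose factors agree modulo `w`, has norm at most `‖w‖`. Each summand therefore has
norm at most `‖w‖² ≤ p⁻²`, and so has their sum by the ultrametric inequality.
-/

open Finset

namespace IsUltrametricDist

variable {R : Type*} [SeminormedRing R] [IsUltrametricDist R]

lemma norm_mul_sub_mul_le {a b c d : R} (hb : ‖b‖ ≤ 1) (hc : ‖c‖ ≤ 1) :
    ‖a * b - c * d‖ ≤ max ‖a - c‖ ‖b - d‖ := by
  rw [show a * b - c * d = (a - c) * b + c * (b - d) by noncomm_ring]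
  refine (norm_add_le_max _ _).trans (max_le_max ?_ ?_)
  · exact (norm_mul_le _ _).trans (mul_le_of_le_one_right (norm_nonneg _) hb)
  · exact (norm_mul_le _ _).trans (mul_le_of_le_one_left (norm_nonneg _) hc)

variable [NormOneClass R]

lemma norm_add_natCast_le_one {x : R} (hx : ‖x‖ ≤ 1) (n : ℕ) : ‖x + n‖ ≤ 1 :=
  (norm_add_le_max _ _).trans (max_le hx (norm_natCast_le_one R n))

lemma norm_ascPochhammer_eval_le_one {x : R} (hx : ‖x‖ ≤ 1) (n : ℕ) :
    ‖(ascPochhammer R n).eval x‖ ≤ 1 := by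
  induction n with
  | zero => simp
  | succ n ih =>
    rw [ascPochhammer_succ_eval]
    exact (norm_mul_le _ _).trans (mul_le_one₀ ih (norm_nonneg _) (norm_add_natCast_le_one hx n))

lemma norm_ascPochhammer_eval_sub_le {x y : R} (hx : ‖x‖ ≤ 1) (hy : ‖y‖ ≤ 1) (n : ℕ) :
    ‖(ascPochhammer R n).eval x - (ascPochhammer R n).eval y‖ ≤ ‖x - y‖ := by
  induction n with
  | zero => simp
  | succ n ih =>
    simp only [ascPochhammer_succ_eval]
    refine (norm_mul_sub_mul_le (norm_add_natCast_le_one hx n)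
      (norm_ascPochhammer_eval_le_one hy n)).trans (max_le ih ?_)
    rw [add_sub_add_right_eq_sub]

end IsUltrametricDist

lemma ascPochhammer_succ_eval_neg {R : Type*} [CommRing R] (w : R) (n : ℕ) :
    (ascPochhammer R (n + 1)).eval (-w) = -w * (ascPochhammer R n).eval (1 - w) := by
  rw [ascPochhammer_succ_left, Polynomial.eval_mul, Polynomial.eval_X, Polynomial.eval_comp,
    Polynomial.eval_add, Polynomial.eval_X, Polynomial.eval_one, neg_add_eq_sub]

section CharZero

variable {K : Type*} [Field K] [CharZero K]

lemma ascPochhammer_eval_half_mul_four_pow_mul_factorial (n : ℕ) :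
    (ascPochhammer K n).eval 2⁻¹ * 4 ^ n * n.factorial = (2 * n).factorial := by
  induction n with
  | zero => simp
  | succ n ih =>
    rw [ascPochhammer_succ_eval, show 2 * (n + 1) = 2 * n + 1 + 1 by ring,
      Nat.factorial_succ, Nat.factorial_succ, Nat.factorial_succ]
    push_cast
    linear_combination (2 * (2 * n + 1) * (n + 1) : K) * ih

lemma centralBinom_div_mul_inv_four_pow (n : ℕ) :
    (((Nat.choose (2 * (n + 1)) (n + 1) : ℚ) / (n + 1 : ℕ) : ℚ) : K) * (4 ^ (n + 1))⁻¹ =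
      (ascPochhammer K (n + 1)).eval 2⁻¹ * (ascPochhammer K n).eval 1 /
        ((n + 1).factorial : K) ^ 2 := by
  have hchoose :
      ((Nat.choose (2 * (n + 1)) (n + 1) * (n + 1).factorial * (n + 1).factorial : ℕ) : K) =
        (2 * (n + 1)).factorial := by
    have h := Nat.choose_mul_factorial_mul_factorial (show n + 1 ≤ 2 * (n + 1) by omega)
    rw [show 2 * (n + 1) - (n + 1) = n + 1 by omega] at h
    exact_mod_cast h
  have hhalf := ascPochhammer_eval_half_mul_four_pow_mul_factorial (K := K) (n + 1)
  rw [ascPochhammer_eval_one, Nat.factorial_succ]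
  rw [Nat.factorial_succ] at hchoose hhalf
  set half := (ascPochhammer K (n + 1)).eval 2⁻¹
  have hfac : (n.factorial : K) ≠ 0 := Nat.cast_ne_zero.mpr n.factorial_ne_zero
  push_cast at hchoose hhalf ⊢
  field_simp
  refine mul_left_cancel₀ (mul_ne_zero (Nat.cast_add_one_ne_zero n) hfac) ?_
  linear_combination hchoose - hhalf

lemma hypergeometric_term_add_centralBinom_term_eq (w z : K) (n : ℕ) :
    (ascPochhammer K (n + 1)).eval (2⁻¹ + w) * (ascPochhammer K (n + 1)).eval (-w) /
        ((n + 1).factorial : K) ^ 2 * z ^ (n + 1) +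
      w * ((((Nat.choose (2 * (n + 1)) (n + 1) : ℚ) / (n + 1 : ℕ) : ℚ) : K) *
        (z / 4) ^ (n + 1)) =
    -w * z ^ (n + 1) / ((n + 1).factorial : K) ^ 2 *
      ((ascPochhammer K (n + 1)).eval (2⁻¹ + w) * (ascPochhammer K n).eval (1 - w) -
        (ascPochhammer K (n + 1)).eval 2⁻¹ * (ascPochhammer K n).eval 1) := by
  rw [ascPochhammer_succ_eval_neg, div_pow, div_eq_mul_inv (z ^ (n + 1)),
    mul_left_comm _ (z ^ (n + 1)), centralBinom_div_mul_inv_four_pow]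
  ring

end CharZero

namespace Padic

variable {p : ℕ} [Fact p.Prime]

lemma norm_two_eq_one (hp : p ≠ 2) : ‖(2 : ℚ_[p])‖ = 1 := by
  rw [← Nat.cast_ofNat, norm_natCast_eq_one_iff]
  exact (Nat.coprime_primes Fact.out Nat.prime_two).mpr hp

lemma norm_factorial_eq_one {n : ℕ} (hn : n < p) : ‖(n.factorial : ℚ_[p])‖ = 1 := by
  rw [norm_natCast_eq_one_iff, Nat.Prime.coprime_iff_not_dvd Fact.out,
    Nat.Prime.dvd_factorial Fact.out]
  omega

open IsUltrametricDist in
lemma norm_hypergeometric_term_add_centralBinom_term_le (hp : p ≠ 2) {w z : ℚ_[p]}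
    (hw : ‖w‖ ≤ 1) (hz : ‖z‖ ≤ 1) {n : ℕ} (hn : n + 1 < p) :
    ‖(ascPochhammer ℚ_[p] (n + 1)).eval (2⁻¹ + w) *
          (ascPochhammer ℚ_[p] (n + 1)).eval (-w) / ((n + 1).factorial : ℚ_[p]) ^ 2 * z ^ (n + 1) +
      w * ((((Nat.choose (2 * (n + 1)) (n + 1) : ℚ) / (n + 1 : ℕ) : ℚ) : ℚ_[p]) *
        (z / 4) ^ (n + 1))‖ ≤ ‖w‖ ^ 2 := by
  have hhalf : ‖(2⁻¹ : ℚ_[p])‖ ≤ 1 := by rw [norm_inv, norm_two_eq_one hp, inv_one]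
  have hhalf_add : ‖2⁻¹ + w‖ ≤ 1 := (norm_add_le_max _ _).trans (max_le hhalf hw)
  have hone_sub : ‖1 - w‖ ≤ 1 := by
    rw [sub_eq_add_neg]
    exact (norm_add_le_max _ _).trans (max_le norm_one.le ((norm_neg w).trans_le hw))
  have hbracket :
      ‖(ascPochhammer ℚ_[p] (n + 1)).eval (2⁻¹ + w) *
            (ascPochhammer ℚ_[p] n).eval (1 - w) -
          (ascPochhammer ℚ_[p] (n + 1)).eval 2⁻¹ * (ascPochhammer ℚ_[p] n).eval 1‖ ≤ ‖w‖ := by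
    refine (norm_mul_sub_mul_le (norm_ascPochhammer_eval_le_one hone_sub n)
      (norm_ascPochhammer_eval_le_one hhalf (n + 1))).trans (max_le ?_ ?_)
    · simpa using norm_ascPochhammer_eval_sub_le hhalf_add hhalf (n + 1)
    · simpa using norm_ascPochhammer_eval_sub_le hone_sub norm_one.le n
  rw [hypergeometric_term_add_centralBinom_term_eq, norm_mul, norm_div, norm_mul, norm_neg,
    norm_pow, norm_pow, norm_factorial_eq_one hn, one_pow, div_one, sq]
  gcongr
  exact mul_le_of_le_one_right (norm_nonneg w) (pow_le_one₀ (norm_nonneg z) hz)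

end Padic

/-- **Congruence (2.3).** For a prime `p > 3` and `t, z ∈ ℤ_p`,
`Σ_{k=0}^{p-1} ((1+pt)/2)_k (-pt/2)_k / k!² · z^k
  ≡ 1 - (pt/2) Σ_{k=1}^{p-1} (C(2k,k)/k)(z/4)^k (mod p²)` in `ℤ_p`. -/
theorem congr_2F1_one_half (p : ℕ) [Fact p.Prime] (hp : 3 < p) (t z : ℤ_[p]) :
    ‖(∑ k ∈ Finset.range p,
          (ascPochhammer ℚ_[p] k).eval ((1 + (p : ℚ_[p]) * (t : ℚ_[p])) / 2) *
            (ascPochhammer ℚ_[p] k).eval (-((p : ℚ_[p]) * (t : ℚ_[p])) / 2) /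
              ((k.factorial : ℚ_[p]))^2 * (z : ℚ_[p])^k) -
      (1 - (p : ℚ_[p]) * (t : ℚ_[p]) / 2 *
        ∑ k ∈ Finset.Icc 1 (p - 1),
          (((Nat.choose (2 * k) k : ℚ) / k : ℚ) : ℚ_[p]) * ((z : ℚ_[p]) / 4)^k)‖
      ≤ (p : ℝ) ^ (-2 : ℤ) := by
  have hp2 : p ≠ 2 := by omega
  set w : ℚ_[p] := (p : ℚ_[p]) * t / 2
  have hw : ‖w‖ ≤ (p : ℝ)⁻¹ := by
    rw [norm_div, Padic.norm_two_eq_one hp2, div_one, norm_mul, Padic.norm_p]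
    exact mul_le_of_le_one_right (by positivity) (PadicInt.norm_le_one t)
  have hw_le_one : ‖w‖ ≤ 1 :=
    hw.trans (inv_le_one_of_one_le₀ (by exact_mod_cast (Fact.out : p.Prime).one_le))
  rw [show (1 + (p : ℚ_[p]) * t) / 2 = 2⁻¹ + w by ring, neg_div, range_eq_Ico,
    sum_eq_sum_Ico_succ_bot (by omega), ← Ico_add_one_right_eq_Icc, Nat.sub_add_cancel (by omega)]
  simp only [ascPochhammer_zero, Polynomial.eval_one, Nat.factorial_zero, Nat.cast_one, one_pow,
    div_one, pow_zero, mul_one, mul_sum, add_sub_sub_cancel, ← sum_add_distrib]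
  refine IsUltrametricDist.norm_sum_le_of_forall_le_of_nonneg (by positivity) fun k hk => ?_
  obtain ⟨n, rfl⟩ := Nat.exists_eq_add_one.mpr (mem_Ico.mp hk).1
  calc _ ≤ ‖w‖ ^ 2 := Padic.norm_hypergeometric_term_add_centralBinom_term_le hp2 hw_le_one
          (PadicInt.norm_le_one z) (mem_Ico.mp hk).2
    _ ≤ ((p : ℝ)⁻¹) ^ 2 := by gcongr
    _ = (p : ℝ) ^ (-2 : ℤ) := by rw [zpow_neg, inv_pow, zpow_ofNat]
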